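/- arXiv:2310.19911 — 2 statements merged into one kernel-verified Lean document; each statement's English description precedes it below -/
import Mathlib

section
/- Let λ > 0, M > 0 and m > 0 be real numbers, and suppose the control estimate ‖u‖ ≤ (M/λ)·‖Pu − λ²u‖ + m·‖Qu‖ holds for every u ∈ H. Then for every u ∈ H one has ‖u‖ ≤ ((2M + (M·‖Q‖ + m)²)/λ)·‖Pu − iλ·Q*(Qu) − λ²u‖, where ‖Q‖ is the operator norm of Q. -/
/-!
Write `P_λ u = P u - iλ Q*Q u - λ² u`. Since `P` is self-adjoint, `Im ⟪P_λ u, u⟫ = λ ‖Q u‖²`,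
so `λ ‖Q u‖² ≤ ‖P_λ u‖ ‖u‖`. Inserting `P u - λ² u = P_λ u + iλ Q*Q u` into the control estimate
gives `λ ‖u‖ ≤ M ‖P_λ u‖ + (M ‖Q‖ + m) λ ‖Q u‖`, and by AM-GM the last term is at most
`(λ ‖u‖ + (M ‖Q‖ + m)² ‖P_λ u‖) / 2`, which is absorbed into the left-hand side.
-/

open ContinuousLinearMap Complex

section DampedPencil

variable {H Y : Type*} [NormedAddCommGroup H] [InnerProductSpace ℂ H] [CompleteSpace H]
  [NormedAddCommGroup Y] [InnerProductSpace ℂ Y] [CompleteSpace Y]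

theorem im_inner_dampedPencil_apply_self {P : H →L[ℂ] H} (hP : IsSelfAdjoint P)
    (Q : H →L[ℂ] Y) (lam : ℝ) (u : H) :
    (inner ℂ (P u - (I * lam) • adjoint Q (Q u) - ((lam : ℂ) ^ 2) • u) u).im
      = lam * ‖Q u‖ ^ 2 := by
  have hPu : (inner ℂ (P u) u).im = 0 := hP.isSymmetric.im_inner_apply_self u
  simp only [inner_sub_left, inner_smul_left, adjoint_inner_left, inner_self_eq_norm_sq_to_K]
  simp [hPu, ← ofReal_pow]

theorem mul_norm_sq_le_norm_dampedPencil_mul_norm {P : H →L[ℂ] H} (hP : IsSelfAdjoint P)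
    (Q : H →L[ℂ] Y) (lam : ℝ) (u : H) :
    lam * ‖Q u‖ ^ 2
      ≤ ‖P u - (I * lam) • adjoint Q (Q u) - ((lam : ℂ) ^ 2) • u‖ * ‖u‖ := by
  rw [← im_inner_dampedPencil_apply_self hP]
  exact (im_le_norm _).trans (norm_inner_le_norm _ _)

theorem norm_adjoint_apply_apply_le (Q : H →L[ℂ] Y) (u : H) :
    ‖adjoint Q (Q u)‖ ≤ ‖Q‖ * ‖Q u‖ := by
  simpa only [LinearIsometryEquiv.norm_map] using (adjoint Q).le_opNorm (Q u)

theorem norm_sub_smul_le_norm_dampedPencil_add (P : H →L[ℂ] H) (Q : H →L[ℂ] Y) {lam : ℝ}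
    (hlam : 0 ≤ lam) (u : H) :
    ‖P u - ((lam : ℂ) ^ 2) • u‖
      ≤ ‖P u - (I * lam) • adjoint Q (Q u) - ((lam : ℂ) ^ 2) • u‖ + lam * (‖Q‖ * ‖Q u‖) := by
  have hdamp : ‖(I * lam) • adjoint Q (Q u)‖ ≤ lam * (‖Q‖ * ‖Q u‖) := by
    rw [norm_smul, norm_mul, norm_I, one_mul, norm_real, Real.norm_of_nonneg hlam]
    exact mul_le_mul_of_nonneg_left (norm_adjoint_apply_apply_le Q u) hlam
  calc ‖P u - ((lam : ℂ) ^ 2) • u‖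
      = ‖(P u - (I * lam) • adjoint Q (Q u) - ((lam : ℂ) ^ 2) • u)
          + (I * lam) • adjoint Q (Q u)‖ := by congr 1; abel
    _ ≤ _ := (norm_add_le _ _).trans (by gcongr)

end DampedPencil

theorem mul_le_of_le_add_of_mul_sq_le {lam a b c M K : ℝ} (hlam : 0 < lam)
    (ha : 0 ≤ a) (hc : 0 ≤ c) (hctrl : lam * a ≤ M * c + K * lam * b)
    (hdiss : lam * b ^ 2 ≤ c * a) :
    lam * a ≤ (2 * M + K ^ 2) * c := by
  have hamgm : K * lam * b ≤ (lam * a + K ^ 2 * c) / 2 := by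
    refine le_of_sq_le_sq ?_ (by positivity)
    nlinarith [sq_nonneg (lam * a - K ^ 2 * c), mul_le_mul_of_nonneg_left hdiss
      (by positivity : 0 ≤ K ^ 2 * lam)]
  linarith

theorem control_to_resolvent_general
    {H Y : Type*} [NormedAddCommGroup H] [InnerProductSpace ℂ H] [CompleteSpace H]
    [NormedAddCommGroup Y] [InnerProductSpace ℂ Y] [CompleteSpace Y]
    (P : H →L[ℂ] H) (hP : IsSelfAdjoint P)
    (Q : H →L[ℂ] Y)
    (lam M m : ℝ) (hlam : 0 < lam) (hM : 0 < M)
    (hctrl : ∀ u : H, ‖u‖ ≤ (M / lam) * ‖P u - ((lam : ℂ) ^ 2) • u‖ + m * ‖Q u‖) :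
    ∀ u : H, ‖u‖ ≤ ((2 * M + (M * ‖Q‖ + m) ^ 2) / lam) *
      ‖P u - (Complex.I * (lam : ℂ)) • (ContinuousLinearMap.adjoint Q) (Q u)
        - ((lam : ℂ) ^ 2) • u‖ := by
  intro u
  set v := P u - (I * lam) • adjoint Q (Q u) - ((lam : ℂ) ^ 2) • u
  have hctrl' : lam * ‖u‖ ≤ M * ‖v‖ + (M * ‖Q‖ + m) * lam * ‖Q u‖ :=
    calc lam * ‖u‖ ≤ lam * ((M / lam) * ‖P u - ((lam : ℂ) ^ 2) • u‖ + m * ‖Q u‖) := by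
          gcongr; exact hctrl u
      _ ≤ lam * ((M / lam) * (‖v‖ + lam * (‖Q‖ * ‖Q u‖)) + m * ‖Q u‖) := by
          gcongr; exact norm_sub_smul_le_norm_dampedPencil_add P Q hlam.le u
      _ = M * ‖v‖ + (M * ‖Q‖ + m) * lam * ‖Q u‖ := by field_simp; ring
  rw [div_mul_eq_mul_div, le_div_iff₀ hlam, mul_comm]
  exact mul_le_of_le_add_of_mul_sq_le hlam (norm_nonneg u) (norm_nonneg v)
    hctrl' (mul_norm_sq_le_norm_dampedPencil_mul_norm hP Q lam u)

/-- Bounded-operator core of Theorem 1.2(1)/Proposition 3.17 (case γ = μ = 0, explicit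
constant): a control estimate `‖u‖ ≤ (M/λ)‖Pu − λ²u‖ + m‖Qu‖` yields the resolvent bound
`‖u‖ ≤ ((2M + (M‖Q‖ + m)²)/λ)‖Pu − iλQ*(Qu) − λ²u‖`. -/
theorem control_to_resolvent
    {H Y : Type*} [NormedAddCommGroup H] [InnerProductSpace ℂ H] [CompleteSpace H]
    [NormedAddCommGroup Y] [InnerProductSpace ℂ Y] [CompleteSpace Y]
    (P : H →L[ℂ] H) (hP : IsSelfAdjoint P)
    (hPnn : ∀ u : H, 0 ≤ (inner ℂ (P u) u : ℂ).re)
    (Q : H →L[ℂ] Y)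
    (lam M m : ℝ) (hlam : 0 < lam) (hM : 0 < M) (hm : 0 < m)
    (hctrl : ∀ u : H, ‖u‖ ≤ (M / lam) * ‖P u - ((lam : ℂ) ^ 2) • u‖ + m * ‖Q u‖) :
    ∀ u : H, ‖u‖ ≤ ((2 * M + (M * ‖Q‖ + m) ^ 2) / lam) *
      ‖P u - (Complex.I * (lam : ℂ)) • (ContinuousLinearMap.adjoint Q) (Q u)
        - ((lam : ℂ) ^ 2) • u‖ :=
  control_to_resolvent_general P hP Q lam M m hlam hM hctrl
end

section
/- Define the bounded operator 𝓐 : H × H → H × H by 𝓐(u, v) = (v, −Pu − Q*(Qv)). Let λ ∈ ℂ with λ ≠ 0. If the operator P_λ : H → H given by P_λu = Pu − iλ·Q*(Qu) − λ²u is bijective, then the operator 𝓐 + iλ·Id is bijective on H × H. -/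
/-!
Substituting `v = f - μ u` with `μ = iλ` turns `(𝓐 + μ)(u, v) = (f, g)` into the triangular system
`v = f - μ u`, `P_λ u = μ f - Q*Q f - g`, since `μ² = -λ²`. So `𝓐 + iλ` is solved by inverting the pencil
`P_λ` once.
-/

section DampedWave

variable {R M : Type*} [CommRing R] [AddCommGroup M] [Module R M]

def dampedGenerator (P B : M →ₗ[R] M) (p : M × M) : M × M := (p.2, -P p.1 - B p.2)

/-- For `μ = iλ` and `B = Q*Q` this is the paper's `P_λ = P - iλ Q*Q - λ²`. -/
def dampedPencil (P B : M →ₗ[R] M) (μ : R) (u : M) : M := P u - μ • B u + μ ^ 2 • u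

variable (P B : M →ₗ[R] M) (μ : R)

theorem dampedGenerator_add_smul_shear (u f : M) :
    dampedGenerator P B (u, f - μ • u) + μ • (u, f - μ • u) =
      (f, -dampedPencil P B μ u - B f + μ • f) := by
  ext
  · simp [dampedGenerator]
  · simp only [dampedGenerator, dampedPencil, Prod.snd_add, Prod.smul_snd, map_sub, map_smul]
    module

theorem bijective_dampedGenerator_add_smul (hL : Function.Bijective (dampedPencil P B μ)) :
    Function.Bijective fun p => dampedGenerator P B p + μ • p := by
  have shear (p : M × M) : ∃ u f, p = (u, f - μ • u) := ⟨p.1, p.2 + μ • p.1, by simp⟩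
  constructor
  · intro p q hpq
    obtain ⟨u, f, rfl⟩ := shear p
    obtain ⟨u', f', rfl⟩ := shear q
    simp only [dampedGenerator_add_smul_shear, Prod.mk.injEq] at hpq
    obtain ⟨rfl, hpencil⟩ := hpq
    obtain rfl : u = u' := hL.1 (by simpa using hpencil)
    rfl
  · rintro ⟨f, g⟩
    obtain ⟨u, hu⟩ := hL.2 (μ • f - B f - g)
    refine ⟨(u, f - μ • u), ?_⟩
    dsimp only
    rw [dampedGenerator_add_smul_shear, hu]
    congr 1
    abel

end DampedWave

theorem generator_shift_bijective_of_pencil_bijective_general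
    {H Y : Type*} [NormedAddCommGroup H] [InnerProductSpace ℂ H] [CompleteSpace H]
    [NormedAddCommGroup Y] [InnerProductSpace ℂ Y] [CompleteSpace Y]
    (P : H →L[ℂ] H)
    (Q : H →L[ℂ] Y)
    (lam : ℂ)
    (hbij : Function.Bijective (fun u : H =>
      P u - (Complex.I * lam) • (ContinuousLinearMap.adjoint Q) (Q u) - (lam ^ 2) • u)) :
    Function.Bijective (fun p : H × H =>
      ((p.2, -P p.1 - (ContinuousLinearMap.adjoint Q) (Q p.2)) : H × H)
        + (Complex.I * lam) • p) := by
  have hpencil : dampedPencil (P : H →ₗ[ℂ] H) (ContinuousLinearMap.adjoint Q ∘L Q : H →L[ℂ] H)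
      (Complex.I * lam) = fun u => P u - (Complex.I * lam) • (ContinuousLinearMap.adjoint Q) (Q u)
        - (lam ^ 2) • u := by
    funext u
    simp [dampedPencil, mul_pow, sub_eq_add_neg]
  exact bijective_dampedGenerator_add_smul _ _ _ (hpencil ▸ hbij)

/-- Lemma 3.10(1) (bounded-operator form): if the damped pencil
`P_λ u = Pu − iλ Q*(Qu) − λ²u` is bijective for `λ ≠ 0`, then the block operator
`𝓐 + iλ·Id` is bijective on `H × H`, where `𝓐(u, v) = (v, −Pu − Q*(Qv))`. -/
theorem generator_shift_bijective_of_pencil_bijective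
    {H Y : Type*} [NormedAddCommGroup H] [InnerProductSpace ℂ H] [CompleteSpace H]
    [NormedAddCommGroup Y] [InnerProductSpace ℂ Y] [CompleteSpace Y]
    (P : H →L[ℂ] H) (hP : IsSelfAdjoint P)
    (hPnn : ∀ u : H, 0 ≤ (inner ℂ (P u) u : ℂ).re)
    (Q : H →L[ℂ] Y)
    (lam : ℂ) (hlam : lam ≠ 0)
    (hbij : Function.Bijective (fun u : H =>
      P u - (Complex.I * lam) • (ContinuousLinearMap.adjoint Q) (Q u) - (lam ^ 2) • u)) :
    Function.Bijective (fun p : H × H =>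
      ((p.2, -P p.1 - (ContinuousLinearMap.adjoint Q) (Q p.2)) : H × H)
        + (Complex.I * lam) • p) :=
  generator_shift_bijective_of_pencil_bijective_general P Q lam hbij
end
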